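/- arXiv:2005.08592 — 3 statements merged into one kernel-verified Lean document; each statement's English description precedes it below -/
import Mathlib

section
/- For fixed real numbers a > 0 and b > 0, the function φ ↦ log(1 + φ) − φ + (1 + φ)·a/(a + b) over φ ≥ 0 is maximized at φ* = a/b, and its maximum value equals log(1 + a/b). Consequently log(1 + a/b) = max_{φ ≥ 0} [log(1+φ) − φ + (1+φ)a/(a+b)]. -/
/-!
With `y = 1 + a / b` one has `a / (a + b) = 1 - 1 / y`, so the objective equals
`log (1 + φ) - (1 + φ) / y + 1`. The concave function `x ↦ log x - x / y` is maximized
at `x = y` by the tangent-line bound `log (x / y) ≤ x / y - 1`, which gives the maximizer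
`φ = a / b` and the maximum `log y`.
-/

open Real Set

theorem isMaxOn_log_sub_div {y : ℝ} (hy : 0 < y) :
    IsMaxOn (fun x : ℝ => log x - x / y) (Ioi 0) y := by
  intro x (hx : 0 < x)
  have tangent : log (x / y) ≤ x / y - 1 := log_le_sub_one_of_pos (div_pos hx hy)
  rw [log_div hx.ne' hy.ne'] at tangent
  show log x - x / y ≤ log y - y / y
  rw [div_self hy.ne']
  linarith

theorem neg_add_mul_div_add_eq_one_sub_div {a b : ℝ} (ha : 0 < a) (hb : 0 < b) (φ : ℝ) :
    -φ + (1 + φ) * a / (a + b) = 1 - (1 + φ) / (1 + a / b) := by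
  field_simp
  ring

/-- Lagrangian dual transform (scalar form): for a, b > 0, the function
φ ↦ log(1+φ) - φ + (1+φ)a/(a+b) over φ ≥ 0 is maximized at φ* = a/b with
maximum value log(1 + a/b). -/
theorem stmt2 (a b : ℝ) (ha : 0 < a) (hb : 0 < b) :
    IsMaxOn (fun φ : ℝ => Real.log (1 + φ) - φ + (1 + φ) * a / (a + b))
      (Set.Ici 0) (a / b) ∧
    Real.log (1 + a / b) - a / b + (1 + a / b) * a / (a + b) = Real.log (1 + a / b) := by
  have hy : 0 < 1 + a / b := by positivity
  have value : -(a / b) + (1 + a / b) * a / (a + b) = 0 := by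
    rw [neg_add_mul_div_add_eq_one_sub_div ha hb, div_self hy.ne', sub_self]
  refine ⟨fun φ (hφ : 0 ≤ φ) => ?_, by linarith⟩
  have bound : log (1 + φ) - (1 + φ) / (1 + a / b)
      ≤ log (1 + a / b) - (1 + a / b) / (1 + a / b) :=
    isMaxOn_log_sub_div hy (show (0 : ℝ) < 1 + φ by linarith)
  rw [div_self hy.ne'] at bound
  show log (1 + φ) - φ + (1 + φ) * a / (a + b)
    ≤ log (1 + a / b) - a / b + (1 + a / b) * a / (a + b)
  linarith [neg_add_mul_div_add_eq_one_sub_div ha hb φ]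
end

section
/- Combining the two transforms: for a > 0, b > 0, log(1 + a/b) = max_{φ ≥ 0} max_{λ∈ℂ} [log(1+φ) − φ + 2 Re(conj(λ)·√((1+φ)a)) − |λ|²(a+b)], where the inner maximum over λ is attained at λ* = √((1+φ)a)/(a+b). -/
/-!
Both transforms are maximizations of concave functions with explicit maximizers. Completing the
square gives `2 Re(conj λ · s) - |λ|² m = |s|²/m - m |λ - s/m|²`, so with `s = √((1 + φ) a)` and
`m = a + b` the inner maximum over `λ` is `(1 + φ) a / (a + b)`, attained at `λ = s/m`. What remains is
`log(1 + φ) - φ + (1 + φ) γ / (1 + γ) ≤ log(1 + γ)` with `γ = a/b`, which is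
`log x ≤ x - 1` at `x = (1 + φ)/(1 + γ)`, with equality at `φ = γ`.
-/

open ComplexConjugate

noncomputable section

/-- The quadratic transform of the ratio `‖s‖² / m`. -/
def quadraticTransform (s : ℂ) (m : ℝ) (l : ℂ) : ℝ :=
  2 * (conj l * s).re - ‖l‖ ^ 2 * m

theorem quadraticTransform_eq (s : ℂ) {m : ℝ} (hm : m ≠ 0) (l : ℂ) :
    quadraticTransform s m l = ‖s‖ ^ 2 / m - m * ‖l - s / m‖ ^ 2 := by
  simp only [quadraticTransform, Complex.sq_norm, Complex.normSq_apply, Complex.mul_re,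
    Complex.conj_re, Complex.conj_im, Complex.sub_re, Complex.sub_im, Complex.div_ofReal_re,
    Complex.div_ofReal_im]
  field_simp
  ring

theorem quadraticTransform_le (s : ℂ) {m : ℝ} (hm : 0 < m) (l : ℂ) :
    quadraticTransform s m l ≤ ‖s‖ ^ 2 / m := by
  rw [quadraticTransform_eq s hm.ne']
  nlinarith [sq_nonneg ‖l - s / m‖]

theorem quadraticTransform_div_self (s : ℂ) {m : ℝ} (hm : m ≠ 0) :
    quadraticTransform s m (s / m) = ‖s‖ ^ 2 / m := by
  simp [quadraticTransform_eq s hm]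

theorem isMaxOn_quadraticTransform (s : ℂ) {m : ℝ} (hm : 0 < m) :
    IsMaxOn (quadraticTransform s m) Set.univ (s / m) :=
  isMaxOn_iff.mpr fun l _ => quadraticTransform_div_self s hm.ne' ▸ quadraticTransform_le s hm l

theorem log_one_add_sub_add_mul_div_le {φ γ : ℝ} (hφ : 0 < 1 + φ) (hγ : 0 < 1 + γ) :
    Real.log (1 + φ) - φ + (1 + φ) * γ / (1 + γ) ≤ Real.log (1 + γ) := by
  have hlog := Real.log_le_sub_one_of_pos (div_pos hφ hγ)
  rw [Real.log_div hφ.ne' hγ.ne'] at hlog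
  have hsplit : (1 + φ) * γ / (1 + γ) = 1 + φ - (1 + φ) / (1 + γ) := by
    field_simp
    ring
  linarith

end

/-- Combining the Lagrangian dual and complex quadratic transforms:
log(1 + a/b) = max over φ ≥ 0 and λ ∈ ℂ of
log(1+φ) - φ + 2 Re(conj(λ)√((1+φ)a)) - |λ|²(a+b), with the inner maximum over λ
attained at λ* = √((1+φ)a)/(a+b). -/
theorem stmt4 (a b : ℝ) (ha : 0 < a) (hb : 0 < b) :
    (∀ φ : ℝ, 0 ≤ φ → ∀ l : ℂ,
      Real.log (1 + φ) - φ + 2 * ((starRingEnd ℂ l) * ((Real.sqrt ((1 + φ) * a) : ℝ) : ℂ)).re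
        - ‖l‖ ^ 2 * (a + b) ≤ Real.log (1 + a / b)) ∧
    (∃ φ : ℝ, 0 ≤ φ ∧ ∃ l : ℂ,
      Real.log (1 + φ) - φ + 2 * ((starRingEnd ℂ l) * ((Real.sqrt ((1 + φ) * a) : ℝ) : ℂ)).re
        - ‖l‖ ^ 2 * (a + b) = Real.log (1 + a / b)) ∧
    (∀ φ : ℝ, 0 ≤ φ →
      IsMaxOn (fun l : ℂ =>
        Real.log (1 + φ) - φ + 2 * ((starRingEnd ℂ l) * ((Real.sqrt ((1 + φ) * a) : ℝ) : ℂ)).re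
          - ‖l‖ ^ 2 * (a + b))
        Set.univ ((Real.sqrt ((1 + φ) * a) / (a + b) : ℝ) : ℂ)) := by
  set s : ℝ → ℂ := fun φ => (Real.sqrt ((1 + φ) * a) : ℂ)
  have hm : 0 < a + b := by positivity
  have hobj : ∀ φ l, Real.log (1 + φ) - φ + 2 * (conj l * s φ).re - ‖l‖ ^ 2 * (a + b) =
      Real.log (1 + φ) - φ + quadraticTransform (s φ) (a + b) l := fun φ l => by
    rw [quadraticTransform]
    ring
  have hinner : ∀ φ, 0 ≤ φ → ‖s φ‖ ^ 2 / (a + b) = (1 + φ) * (a / b) / (1 + a / b) := fun φ hφ => by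
    rw [Complex.norm_real, Real.norm_eq_abs, sq_abs, Real.sq_sqrt (by positivity)]
    field_simp
    ring
  have hmaximizer : ∀ φ, ((Real.sqrt ((1 + φ) * a) / (a + b) : ℝ) : ℂ) = s φ / (a + b : ℝ) :=
    fun φ => Complex.ofReal_div _ _
  refine ⟨fun φ hφ l => ?_, ⟨a / b, by positivity, s (a / b) / (a + b : ℝ), ?_⟩, fun φ hφ => ?_⟩
  · rw [hobj]
    linarith [quadraticTransform_le (s φ) hm l, hinner φ hφ,
      log_one_add_sub_add_mul_div_le (γ := a / b) (by linarith : 0 < 1 + φ) (by positivity)]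
  · have hγ : (1 + a / b) * (a / b) / (1 + a / b) = a / b := by field_simp
    rw [hobj, quadraticTransform_div_self _ hm.ne', hinner _ (by positivity), hγ]
    ring
  · refine isMaxOn_iff.mpr fun l _ => ?_
    rw [hmaximizer, hobj, hobj]
    linarith [isMaxOn_iff.mp (isMaxOn_quadraticTransform (s φ) hm) l trivial]
end

section
/- For the SINR θ = a/b with a, b > 0 and the surrogate r̂(φ, λ) = log(1+φ) − φ + 2Re(conj(λ)√((1+φ)a)) − |λ|²(a+b): for any fixed φ ≥ 0, max_λ r̂(φ,λ) = log(1+φ) − φ + (1+φ)·a/(a+b), and this is a concave function of φ whose unique stationary point is φ = a/b. -/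
/-!
Completing the square, `‖c • λ - w‖² ≥ 0`, shows that `2 Re(conj λ · w) - ‖λ‖² c` is at most
`‖w‖² / c`, with equality at `λ = w / c`; for `w = √((1 + φ) a)` and `c = a + b` this is the
maximum over `λ`. The maximized function is `log (1 + φ)` plus an affine function, hence concave,
and its derivative `(1 + φ)⁻¹ - b / (a + b)` vanishes exactly at `1 + φ = (a + b) / b`.
-/
open Real Set ComplexConjugate

lemma two_mul_re_conj_mul_sub_sq_norm_mul_le (l w : ℂ) {c : ℝ} (hc : 0 < c) :
    2 * (conj l * w).re - ‖l‖ ^ 2 * c ≤ ‖w‖ ^ 2 / c := by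
  rw [le_div_iff₀ hc]
  simp only [Complex.sq_norm, Complex.normSq_apply, Complex.mul_re, Complex.conj_re,
    Complex.conj_im]
  nlinarith [sq_nonneg (c * l.re - w.re), sq_nonneg (c * l.im - w.im)]

lemma two_mul_re_conj_div_mul_sub_sq_norm_div_mul (w : ℂ) {c : ℝ} (hc : c ≠ 0) :
    2 * (conj (w / c) * w).re - ‖w / c‖ ^ 2 * c = ‖w‖ ^ 2 / c := by
  rw [map_div₀, Complex.conj_ofReal, div_mul_eq_mul_div, ← Complex.normSq_eq_conj_mul_self,
    ← Complex.ofReal_div, Complex.ofReal_re, norm_div, Complex.norm_real, Real.norm_eq_abs,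
    div_pow, sq_abs, Complex.sq_norm]
  field_simp
  ring

lemma concaveOn_log_one_add : ConcaveOn ℝ (Ioi (-1)) fun x : ℝ => log (1 + x) := by
  have h := strictConcaveOn_log_Ioi.concaveOn.translate_right (1 : ℝ)
  have hs : (fun z : ℝ => 1 + z) ⁻¹' Ioi 0 = Ioi (-1) := by
    ext z; simp only [mem_preimage, mem_Ioi]; constructor <;> intro <;> linarith
  rwa [hs] at h

lemma concaveOn_mul_add {s : Set ℝ} (hs : Convex ℝ s) (c d : ℝ) :
    ConcaveOn ℝ s fun x => c * x + d :=
  ((LinearMap.mulLeft ℝ c).concaveOn hs).add_const d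

lemma concaveOn_optimalSurrogate (a b : ℝ) :
    ConcaveOn ℝ (Ioi (-1)) fun φ : ℝ => log (1 + φ) - φ + (1 + φ) * a / (a + b) := by
  have h := concaveOn_log_one_add.add
    (concaveOn_mul_add (convex_Ioi _) (a / (a + b) - 1) (a / (a + b)))
  refine h.congr fun φ _ => ?_
  simp only [Pi.add_apply]
  ring

lemma hasDerivAt_optimalSurrogate (a b : ℝ) {φ : ℝ} (hφ : 1 + φ ≠ 0) :
    HasDerivAt (fun φ : ℝ => log (1 + φ) - φ + (1 + φ) * a / (a + b))
      ((1 + φ)⁻¹ - 1 + a / (a + b)) φ := by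
  have h1 : HasDerivAt (fun x : ℝ => 1 + x) 1 φ := (hasDerivAt_id' φ).const_add 1
  refine (((h1.log hφ).sub (hasDerivAt_id' φ)).add
    ((h1.mul_const a).div_const (a + b))).congr_deriv ?_
  ring

lemma inv_one_add_sub_one_add_div_eq_zero_iff {a b φ : ℝ} (hb : b ≠ 0) (hab : a + b ≠ 0)
    (hφ : 1 + φ ≠ 0) :
    (1 + φ)⁻¹ - 1 + a / (a + b) = 0 ↔ φ = a / b := by
  rw [eq_div_iff hb]
  field_simp
  constructor <;> intro h <;> linarith

/-- Optimality of the auxiliary-variable updates in the FMP inner loop: for each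
φ ≥ 0, maximizing the surrogate r̂(φ, λ) over λ gives
h(φ) = log(1+φ) - φ + (1+φ)a/(a+b), which is concave on φ ≥ 0 with unique stationary
point φ = a/b. -/
theorem stmt18 (a b : ℝ) (ha : 0 < a) (hb : 0 < b) :
    (∀ φ : ℝ, 0 ≤ φ →
      (∀ l : ℂ,
        Real.log (1 + φ) - φ + 2 * ((starRingEnd ℂ l) * ((Real.sqrt ((1 + φ) * a) : ℝ) : ℂ)).re
            - ‖l‖ ^ 2 * (a + b)
          ≤ Real.log (1 + φ) - φ + (1 + φ) * a / (a + b)) ∧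
      Real.log (1 + φ) - φ
          + 2 * ((starRingEnd ℂ ((Real.sqrt ((1 + φ) * a) / (a + b) : ℝ) : ℂ))
              * ((Real.sqrt ((1 + φ) * a) : ℝ) : ℂ)).re
          - ‖((Real.sqrt ((1 + φ) * a) / (a + b) : ℝ) : ℂ)‖ ^ 2 * (a + b)
        = Real.log (1 + φ) - φ + (1 + φ) * a / (a + b)) ∧
    ConcaveOn ℝ (Set.Ici 0)
      (fun φ : ℝ => Real.log (1 + φ) - φ + (1 + φ) * a / (a + b)) ∧
    deriv (fun φ : ℝ => Real.log (1 + φ) - φ + (1 + φ) * a / (a + b)) (a / b) = 0 ∧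
    (∀ φ : ℝ, 0 ≤ φ →
      deriv (fun φ : ℝ => Real.log (1 + φ) - φ + (1 + φ) * a / (a + b)) φ = 0 →
      φ = a / b) := by
  have hab : 0 < a + b := add_pos ha hb
  refine ⟨fun φ hφ => ?_,
    (concaveOn_optimalSurrogate a b).subset (Ici_subset_Ioi.mpr (by norm_num)) (convex_Ici 0),
    ?_, fun φ hφ hderiv => ?_⟩
  · have hw : ‖((√((1 + φ) * a) : ℝ) : ℂ)‖ ^ 2 = (1 + φ) * a := by
      rw [Complex.norm_real, Real.norm_eq_abs, sq_abs, Real.sq_sqrt (by positivity)]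
    refine ⟨fun l => ?_, ?_⟩
    · have := two_mul_re_conj_mul_sub_sq_norm_mul_le l (√((1 + φ) * a) : ℂ) hab
      rw [hw] at this
      linarith
    · have := two_mul_re_conj_div_mul_sub_sq_norm_div_mul (√((1 + φ) * a) : ℂ) hab.ne'
      rw [hw] at this
      rw [Complex.ofReal_div]
      linarith
  · have hφ : 1 + a / b ≠ 0 := by positivity
    rw [(hasDerivAt_optimalSurrogate a b hφ).deriv]
    exact (inv_one_add_sub_one_add_div_eq_zero_iff hb.ne' hab.ne' hφ).mpr rfl
  · have hφ' : 1 + φ ≠ 0 := by positivity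
    rw [(hasDerivAt_optimalSurrogate a b hφ').deriv] at hderiv
    exact (inv_one_add_sub_one_add_div_eq_zero_iff hb.ne' hab.ne' hφ').mp hderiv
end
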